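/- arXiv:1910.08421 — 5 statements merged into one kernel-verified Lean document; each statement's English description precedes it below -/
import Mathlib

section
/- Let (Δ, G, ω, ζ) be a generalised voltage graph and let x₀ be a dart of Δ with x₀ ≠ x₀⁻¹. Define ζ̄ by ζ̄(x) = ζ(x) for x ≠ x₀⁻¹ and ζ̄(x₀⁻¹) = ζ(x₀)⁻¹. Then (Δ, G, ω, ζ̄) is a generalised voltage graph and GenCov(Δ, G, ω, ζ) = GenCov(Δ, G, ω, ζ̄). -/
/-- A graph in the sense of Malnič–Nedela–Škoviera: vertices, darts,
an initial-vertex function and an involutory dart-reversal. -/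
structure PreGraph (V D : Type*) where
  beg : D → V
  inv : D → D
  inv_inv : ∀ x, inv (inv x) = x

/-- The terminal vertex of a dart. -/
def PreGraph.term {V D : Type*} (Δ : PreGraph V D) (x : D) : V := Δ.beg (Δ.inv x)

/-- A generalised voltage graph on a graph `Δ`: a weight function
(given on vertices by `ωv` and on darts by `ωd`) and a voltage assignment `ζ`
satisfying the three defining conditions. -/
structure GenVoltage (V D : Type*) (G : Type*) [Group G] (Δ : PreGraph V D) where
  ωv : V → Subgroup G
  ωd : D → Subgroup G
  ζ : D → G
  wle : ∀ x, ωd x ≤ ωv (Δ.beg x)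
  wconj : ∀ x g, g ∈ ωd x ↔ ζ x * g * (ζ x)⁻¹ ∈ ωd (Δ.inv x)
  wcyc : ∀ x, ζ (Δ.inv x) * ζ x ∈ ωd x

namespace GenVoltage

variable {V D G : Type*} [Group G] {Δ : PreGraph V D} (Θ : GenVoltage V D G Δ)

/-- Vertices of the generalised cover: pairs `(v, ω(v)g)` of a vertex of `Δ`
and a right coset of its weight group. -/
abbrev CovV := Σ v : V, Quotient (QuotientGroup.rightRel (Θ.ωv v))

/-- Darts of the generalised cover: pairs `(x, ω(x)g)`. -/
abbrev CovD := Σ x : D, Quotient (QuotientGroup.rightRel (Θ.ωd x))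

/-- The cover vertex `(v, ω(v)g)`. -/
def vmk (v : V) (g : G) : Θ.CovV := ⟨v, Quotient.mk _ g⟩

/-- The cover dart `(x, ω(x)g)`. -/
def dmk (x : D) (g : G) : Θ.CovD := ⟨x, Quotient.mk _ g⟩

/-- `beg` of the cover: `(x, ω(x)g) ↦ (beg x, ω(beg x)g)`. -/
def covBeg : Θ.CovD → Θ.CovV :=
  fun p => ⟨Δ.beg p.1, Quotient.map id (fun g h hgh => by
    have h1 : h * g⁻¹ ∈ Θ.ωd p.1 := QuotientGroup.rightRel_apply.mp hgh
    exact QuotientGroup.rightRel_apply.mpr (Θ.wle p.1 h1)) p.2⟩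

/-- `inv` of the cover: `(x, ω(x)g) ↦ (x⁻¹, ω(x⁻¹)ζ(x)g)`. -/
def covInv : Θ.CovD → Θ.CovD :=
  fun p => ⟨Δ.inv p.1, Quotient.map (fun g => Θ.ζ p.1 * g) (fun g h hgh => by
    have h1 : h * g⁻¹ ∈ Θ.ωd p.1 := QuotientGroup.rightRel_apply.mp hgh
    have h2 := (Θ.wconj p.1 (h * g⁻¹)).1 h1
    exact QuotientGroup.rightRel_apply.mpr (by simpa [mul_assoc, mul_inv_rev] using h2)) p.2⟩

/-- Terminal vertex of a cover dart. -/
def covTerm : Θ.CovD → Θ.CovV := fun p => Θ.covBeg (Θ.covInv p)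

/-- Right translation by `h` on the cover: `(x, ω(x)g) ↦ (x, ω(x)gh)`, on vertices. -/
def covRightV (h : G) : Θ.CovV → Θ.CovV :=
  fun p => ⟨p.1, Quotient.map (fun g => g * h) (fun a b hab => by
    have h1 := QuotientGroup.rightRel_apply.mp hab
    exact QuotientGroup.rightRel_apply.mpr (by simpa [mul_assoc, mul_inv_rev] using h1)) p.2⟩

/-- Right translation by `h` on the cover, on darts. -/
def covRightD (h : G) : Θ.CovD → Θ.CovD :=
  fun p => ⟨p.1, Quotient.map (fun g => g * h) (fun a b hab => by
    have h1 := QuotientGroup.rightRel_apply.mp hab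
    exact QuotientGroup.rightRel_apply.mpr (by simpa [mul_assoc, mul_inv_rev] using h1)) p.2⟩

end GenVoltage

/-- Walks with respect to abstract initial/terminal vertex functions `B`, `T`:
`WalkBT B T u v l` means `l` is a walk from `u` to `v`. -/
inductive WalkBT {Vt Dt : Type*} (B T : Dt → Vt) : Vt → Vt → List Dt → Prop
  | nil (v : Vt) : WalkBT B T v v []
  | cons (x : Dt) {v : Vt} {l : List Dt} :
      WalkBT B T (T x) v l → WalkBT B T (B x) v (x :: l)


/-!
The generalised cover only sees each voltage `ζ(x)` through its right coset `ω(x⁻¹)ζ(x)`, and any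
choice of representatives of these cosets again satisfies the axioms of a generalised voltage
graph. By the cycle condition `ζ(x₀⁻¹)ζ(x₀) ∈ ω(x₀)`, the new voltage `ζ(x₀)⁻¹` lies in the coset
`ω(x₀)ζ(x₀⁻¹)` of the old one.
-/

theorem Subgroup.conj_mem_iff_of_mem {G : Type*} [Group G] {H : Subgroup G} {h a : G}
    (hh : h ∈ H) : h * a * h⁻¹ ∈ H ↔ a ∈ H := by
  rw [H.mul_mem_cancel_right (H.inv_mem hh), H.mul_mem_cancel_left hh]

theorem QuotientGroup.mk_rightRel_mul_eq_of_mul_inv_mem {G : Type*} [Group G] {H : Subgroup G}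
    {a b : G} (hab : a * b⁻¹ ∈ H) (g : G) :
    Quotient.mk (QuotientGroup.rightRel H) (a * g) = Quotient.mk _ (b * g) := by
  refine Quotient.sound (QuotientGroup.rightRel_apply.mpr ?_)
  simpa [mul_assoc] using H.inv_mem hab

namespace GenVoltage

variable {V D G : Type*} [Group G] {Δ : PreGraph V D} (Θ : GenVoltage V D G Δ)

theorem inv_zeta_mul_inv_zeta_inv_mem (x : D) : (Θ.ζ x)⁻¹ * (Θ.ζ (Δ.inv x))⁻¹ ∈ Θ.ωd x := by
  simpa only [mul_inv_rev] using (Θ.ωd x).inv_mem (Θ.wcyc x)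

/-- In the cycle condition the extra factor `ζ' x ζ(x)⁻¹ ∈ ω(x⁻¹)` is carried into `ω(x)` by
conjugation with `ζ(x⁻¹)`. -/
def withVoltage (ζ' : D → G) (hζ' : ∀ x, ζ' x * (Θ.ζ x)⁻¹ ∈ Θ.ωd (Δ.inv x)) :
    GenVoltage V D G Δ where
  ωv := Θ.ωv
  ωd := Θ.ωd
  ζ := ζ'
  wle := Θ.wle
  wconj x g := by
    have hconj : ζ' x * g * (ζ' x)⁻¹
        = (ζ' x * (Θ.ζ x)⁻¹) * (Θ.ζ x * g * (Θ.ζ x)⁻¹) * (ζ' x * (Θ.ζ x)⁻¹)⁻¹ := by group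
    rw [hconj, Subgroup.conj_mem_iff_of_mem (hζ' x)]
    exact Θ.wconj x g
  wcyc x := by
    have hinv := hζ' (Δ.inv x)
    rw [Δ.inv_inv] at hinv
    have htrans : Θ.ζ (Δ.inv x) * (ζ' x * (Θ.ζ x)⁻¹) * (Θ.ζ (Δ.inv x))⁻¹ ∈ Θ.ωd x := by
      simpa only [Δ.inv_inv] using (Θ.wconj (Δ.inv x) _).mp (hζ' x)
    have hcyc : ζ' (Δ.inv x) * ζ' x
        = (ζ' (Δ.inv x) * (Θ.ζ (Δ.inv x))⁻¹)
          * (Θ.ζ (Δ.inv x) * (ζ' x * (Θ.ζ x)⁻¹) * (Θ.ζ (Δ.inv x))⁻¹)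
          * (Θ.ζ (Δ.inv x) * Θ.ζ x) := by group
    rw [hcyc]
    exact mul_mem (mul_mem hinv htrans) (Θ.wcyc x)

end GenVoltage

theorem stmt_2_general {V D G : Type*} [Group G] [DecidableEq D] {Δ : PreGraph V D}
    (Θ : GenVoltage V D G Δ) (x₀ : D) :
    ∃ Θ' : GenVoltage V D G Δ,
      Θ'.ωv = Θ.ωv ∧ Θ'.ωd = Θ.ωd ∧
      Θ'.ζ = (fun x => if x = Δ.inv x₀ then (Θ.ζ x₀)⁻¹ else Θ.ζ x) ∧
      ∀ (x : D) (g : G),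
        (Quotient.mk (QuotientGroup.rightRel (Θ.ωd (Δ.inv x))) (Θ.ζ x * g)) =
          Quotient.mk (QuotientGroup.rightRel (Θ.ωd (Δ.inv x)))
            ((if x = Δ.inv x₀ then (Θ.ζ x₀)⁻¹ else Θ.ζ x) * g) := by
  have hcoset : ∀ x,
      (if x = Δ.inv x₀ then (Θ.ζ x₀)⁻¹ else Θ.ζ x) * (Θ.ζ x)⁻¹ ∈ Θ.ωd (Δ.inv x) := by
    intro x
    split_ifs with hx
    · subst hx
      rw [Δ.inv_inv]
      exact Θ.inv_zeta_mul_inv_zeta_inv_mem x₀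
    · rw [mul_inv_cancel]
      exact one_mem _
  exact ⟨Θ.withVoltage _ hcoset, rfl, rfl, rfl, fun x g =>
    (QuotientGroup.mk_rightRel_mul_eq_of_mul_inv_mem (hcoset x) g).symm⟩

/-- Replacing `ζ(x₀⁻¹)` by `ζ(x₀)⁻¹` again yields a generalised voltage graph with
the same generalised cover. -/
theorem stmt_2 {V D G : Type*} [Group G] [DecidableEq D] {Δ : PreGraph V D}
    (Θ : GenVoltage V D G Δ) (x₀ : D) (hx₀ : x₀ ≠ Δ.inv x₀) :
    ∃ Θ' : GenVoltage V D G Δ,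
      Θ'.ωv = Θ.ωv ∧ Θ'.ωd = Θ.ωd ∧
      Θ'.ζ = (fun x => if x = Δ.inv x₀ then (Θ.ζ x₀)⁻¹ else Θ.ζ x) ∧
      ∀ (x : D) (g : G),
        (Quotient.mk (QuotientGroup.rightRel (Θ.ωd (Δ.inv x))) (Θ.ζ x * g)) =
          Quotient.mk (QuotientGroup.rightRel (Θ.ωd (Δ.inv x)))
            ((if x = Δ.inv x₀ then (Θ.ζ x₀)⁻¹ else Θ.ζ x) * g) :=
  stmt_2_general Θ x₀
end

section
/- For every h ∈ G, the map h̄ sending (x, ω(x)g) to (x, ω(x)gh) for every vertex or dart x of Δ and g ∈ G is an automorphism of the generalised cover GenCov(Δ, G, ω, ζ). -/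
namespace GenVoltage

variable {V D G : Type*} [Group G] {Δ : PreGraph V D} (Θ : GenVoltage V D G Δ)

theorem covRightV_one (p : Θ.CovV) : Θ.covRightV 1 p = p := by
  obtain ⟨v, q⟩ := p
  induction q using Quotient.inductionOn with | _ g =>
  change Θ.vmk v (g * 1) = Θ.vmk v g
  rw [mul_one]

theorem covRightV_covRightV (h k : G) (p : Θ.CovV) :
    Θ.covRightV k (Θ.covRightV h p) = Θ.covRightV (h * k) p := by
  obtain ⟨v, q⟩ := p
  induction q using Quotient.inductionOn with | _ g =>
  change Θ.vmk v (g * h * k) = Θ.vmk v (g * (h * k))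
  rw [mul_assoc]

theorem covRightD_one (p : Θ.CovD) : Θ.covRightD 1 p = p := by
  obtain ⟨x, q⟩ := p
  induction q using Quotient.inductionOn with | _ g =>
  change Θ.dmk x (g * 1) = Θ.dmk x g
  rw [mul_one]

theorem covRightD_covRightD (h k : G) (p : Θ.CovD) :
    Θ.covRightD k (Θ.covRightD h p) = Θ.covRightD (h * k) p := by
  obtain ⟨x, q⟩ := p
  induction q using Quotient.inductionOn with | _ g =>
  change Θ.dmk x (g * h * k) = Θ.dmk x (g * (h * k))
  rw [mul_assoc]

theorem covRightV_bijective (h : G) : Function.Bijective (Θ.covRightV h) :=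
  Function.bijective_iff_has_inverse.mpr ⟨Θ.covRightV h⁻¹,
    fun p => by rw [covRightV_covRightV, mul_inv_cancel, covRightV_one],
    fun p => by rw [covRightV_covRightV, inv_mul_cancel, covRightV_one]⟩

theorem covRightD_bijective (h : G) : Function.Bijective (Θ.covRightD h) :=
  Function.bijective_iff_has_inverse.mpr ⟨Θ.covRightD h⁻¹,
    fun p => by rw [covRightD_covRightD, mul_inv_cancel, covRightD_one],
    fun p => by rw [covRightD_covRightD, inv_mul_cancel, covRightD_one]⟩

theorem covBeg_covRightD (h : G) (p : Θ.CovD) :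
    Θ.covBeg (Θ.covRightD h p) = Θ.covRightV h (Θ.covBeg p) := by
  obtain ⟨x, q⟩ := p
  induction q using Quotient.inductionOn
  rfl

-- Left multiplication by `ζ(x)` commutes with right multiplication by `h`.
theorem covInv_covRightD (h : G) (p : Θ.CovD) :
    Θ.covInv (Θ.covRightD h p) = Θ.covRightD h (Θ.covInv p) := by
  obtain ⟨x, q⟩ := p
  induction q using Quotient.inductionOn with | _ g =>
  change Θ.dmk (Δ.inv x) (Θ.ζ x * (g * h)) = Θ.dmk (Δ.inv x) (Θ.ζ x * g * h)
  rw [mul_assoc]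

end GenVoltage

/-- Right translation by `h ∈ G` is an automorphism of the generalised cover. -/
theorem stmt_4 {V D G : Type*} [Group G] {Δ : PreGraph V D}
    (Θ : GenVoltage V D G Δ) :
    ∀ h : G, ∃ (Φv : Θ.CovV → Θ.CovV) (Φd : Θ.CovD → Θ.CovD),
      (∀ (v : V) (g : G), Φv (Θ.vmk v g) = Θ.vmk v (g * h)) ∧
      (∀ (x : D) (g : G), Φd (Θ.dmk x g) = Θ.dmk x (g * h)) ∧
      Function.Bijective Φv ∧ Function.Bijective Φd ∧
      (∀ p, Θ.covBeg (Φd p) = Φv (Θ.covBeg p)) ∧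
      (∀ p, Θ.covInv (Φd p) = Φd (Θ.covInv p)) := fun h =>
  ⟨Θ.covRightV h, Θ.covRightD h, fun _ _ => rfl, fun _ _ => rfl, Θ.covRightV_bijective h,
    Θ.covRightD_bijective h, Θ.covBeg_covRightD h, Θ.covInv_covRightD h⟩
end

section
/- Let φ ∈ Aut(Δ) and f ∈ Aut(G) satisfy ω(x^φ) = f(ω(x)) for all vertices/darts x and ζ(x^φ) = f(ζ(x)) for all darts x. Then the permutation Φ defined by (x, ω(x)g)^Φ = (x^φ, ω(x^φ)f(g)) is an automorphism of GenCov(Δ, G, ω, ζ). -/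
theorem QuotientGroup.rightRel_mulEquiv_iff {G G' : Type*} [Group G] [Group G'] (f : G ≃* G')
    {H : Subgroup G} {K : Subgroup G'} (hK : K = H.map f.toMonoidHom) (a b : G) :
    QuotientGroup.rightRel H a b ↔ QuotientGroup.rightRel K (f a) (f b) := by
  rw [QuotientGroup.rightRel_apply, QuotientGroup.rightRel_apply, hK, ← map_inv, ← map_mul]
  exact (Subgroup.mem_map_iff_mem (f := f.toMonoidHom) f.injective).symm

def QuotientGroup.rightRelCongr {G G' : Type*} [Group G] [Group G'] (f : G ≃* G')
    {H : Subgroup G} {K : Subgroup G'} (hK : K = H.map f.toMonoidHom) :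
    Quotient (QuotientGroup.rightRel H) ≃ Quotient (QuotientGroup.rightRel K) :=
  Quotient.congr f.toEquiv (QuotientGroup.rightRel_mulEquiv_iff f hK)

namespace GenVoltage

section Functoriality

variable {V D G V' D' G' : Type*} [Group G] [Group G'] {Δ : PreGraph V D} {Δ' : PreGraph V' D'}
  (Θ : GenVoltage V D G Δ) (Θ' : GenVoltage V' D' G' Δ')

@[simp]
theorem covBeg_dmk (x : D) (g : G) : Θ.covBeg (Θ.dmk x g) = Θ.vmk (Δ.beg x) g := rfl

@[simp]
theorem covInv_dmk (x : D) (g : G) : Θ.covInv (Θ.dmk x g) = Θ.dmk (Δ.inv x) (Θ.ζ x * g) := rfl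

variable {Θ Θ'} (f : G ≃* G')

def coverEquivV (φv : V ≃ V') (hωv : ∀ v, Θ'.ωv (φv v) = (Θ.ωv v).map f.toMonoidHom) :
    Θ.CovV ≃ Θ'.CovV :=
  Equiv.sigmaCongr φv fun v => QuotientGroup.rightRelCongr f (hωv v)

def coverEquivD (φd : D ≃ D') (hωd : ∀ x, Θ'.ωd (φd x) = (Θ.ωd x).map f.toMonoidHom) :
    Θ.CovD ≃ Θ'.CovD :=
  Equiv.sigmaCongr φd fun x => QuotientGroup.rightRelCongr f (hωd x)

@[simp]
theorem coverEquivV_vmk (φv : V ≃ V') (hωv : ∀ v, Θ'.ωv (φv v) = (Θ.ωv v).map f.toMonoidHom)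
    (v : V) (g : G) : coverEquivV f φv hωv (Θ.vmk v g) = Θ'.vmk (φv v) (f g) := rfl

@[simp]
theorem coverEquivD_dmk (φd : D ≃ D') (hωd : ∀ x, Θ'.ωd (φd x) = (Θ.ωd x).map f.toMonoidHom)
    (x : D) (g : G) : coverEquivD f φd hωd (Θ.dmk x g) = Θ'.dmk (φd x) (f g) := rfl

theorem dmk_surjective (p : Θ.CovD) : ∃ x g, Θ.dmk x g = p := by
  obtain ⟨x, q⟩ := p
  obtain ⟨g, rfl⟩ := Quotient.exists_rep q
  exact ⟨x, g, rfl⟩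

theorem covBeg_coverEquivD (φv : V ≃ V') (φd : D ≃ D')
    (hωv : ∀ v, Θ'.ωv (φv v) = (Θ.ωv v).map f.toMonoidHom)
    (hωd : ∀ x, Θ'.ωd (φd x) = (Θ.ωd x).map f.toMonoidHom)
    (hbeg : ∀ x, φv (Δ.beg x) = Δ'.beg (φd x)) (p : Θ.CovD) :
    Θ'.covBeg (coverEquivD f φd hωd p) = coverEquivV f φv hωv (Θ.covBeg p) := by
  obtain ⟨x, g, rfl⟩ := dmk_surjective p
  simp only [coverEquivD_dmk, covBeg_dmk, coverEquivV_vmk, hbeg]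

theorem covInv_coverEquivD (φd : D ≃ D') (hωd : ∀ x, Θ'.ωd (φd x) = (Θ.ωd x).map f.toMonoidHom)
    (hinv : ∀ x, φd (Δ.inv x) = Δ'.inv (φd x)) (hζ : ∀ x, Θ'.ζ (φd x) = f (Θ.ζ x)) (p : Θ.CovD) :
    Θ'.covInv (coverEquivD f φd hωd p) = coverEquivD f φd hωd (Θ.covInv p) := by
  obtain ⟨x, g, rfl⟩ := dmk_surjective p
  simp only [coverEquivD_dmk, covInv_dmk, hinv, hζ, map_mul]

end Functoriality

end GenVoltage

/-- A compatible pair `(φ, f)` of a graph automorphism of `Δ` and a group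
automorphism of `G` induces an automorphism of the generalised cover. -/
theorem stmt_8 {V D G : Type*} [Group G] {Δ : PreGraph V D}
    (Θ : GenVoltage V D G Δ) (φv : V ≃ V) (φd : D ≃ D) (f : G ≃* G)
    (hbeg : ∀ x : D, φv (Δ.beg x) = Δ.beg (φd x))
    (hinv : ∀ x : D, φd (Δ.inv x) = Δ.inv (φd x))
    (hωv : ∀ v : V, Θ.ωv (φv v) = (Θ.ωv v).map f.toMonoidHom)
    (hωd : ∀ x : D, Θ.ωd (φd x) = (Θ.ωd x).map f.toMonoidHom)
    (hζ : ∀ x : D, Θ.ζ (φd x) = f (Θ.ζ x)) :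
    ∃ (Φv : Θ.CovV → Θ.CovV) (Φd : Θ.CovD → Θ.CovD),
      (∀ (v : V) (g : G), Φv (Θ.vmk v g) = Θ.vmk (φv v) (f g)) ∧
      (∀ (x : D) (g : G), Φd (Θ.dmk x g) = Θ.dmk (φd x) (f g)) ∧
      Function.Bijective Φv ∧ Function.Bijective Φd ∧
      (∀ p, Θ.covBeg (Φd p) = Φv (Θ.covBeg p)) ∧
      (∀ p, Θ.covInv (Φd p) = Φd (Θ.covInv p)) :=
  ⟨GenVoltage.coverEquivV f φv hωv, GenVoltage.coverEquivD f φd hωd,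
    GenVoltage.coverEquivV_vmk f φv hωv, GenVoltage.coverEquivD_dmk f φd hωd,
    Equiv.bijective _, Equiv.bijective _,
    GenVoltage.covBeg_coverEquivD f φv φd hωv hωd hbeg,
    GenVoltage.covInv_coverEquivD f φd hωd hinv hζ⟩
end

section
/- Let (Δ,G,ω,ζ) be a generalised voltage graph with Δ connected, T-normalised for a spanning tree T. Let A = ⟨ζ(x) : x ∈ D(Δ)\D(T)⟩ and B = ⟨ω(v) : v ∈ V(Δ)⟩. Then the generalised cover GenCov(Δ,G,ω,ζ) is connected if and only if G = ⟨A, B⟩. -/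
/-- `S` is (the dart set of) a spanning tree of `Δ`: closed under dart-reversal,
spanning and connected (any two vertices are joined by a walk inside `S`),
and acyclic (the only reduced closed walks inside `S` are trivial). -/
def IsSpanningTree {V D : Type*} (Δ : PreGraph V D) (S : Set D) : Prop :=
  (∀ x ∈ S, Δ.inv x ∈ S) ∧
  (∀ u v : V, ∃ l : List D, WalkBT Δ.beg Δ.term u v l ∧ ∀ x ∈ l, x ∈ S) ∧
  (∀ (v : V) (l : List D), WalkBT Δ.beg Δ.term v v l →
      List.Chain' (fun a b => b ≠ Δ.inv a) l → (∀ x ∈ l, x ∈ S) → l = [])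


/-!
Fix a base vertex `v₀`. The `g` for which `(v₀, ω(v₀)g)` is reachable from `(v₀, ω(v₀))` form
a subgroup `K` of `G`, because right translation by `G` is an automorphism of the cover.
Lifting walks of the spanning tree (voltage `1`) joins `(u, ω(u)g)` to `(v, ω(v)g)` for all
`u`, `v`, `g`, which puts each `ζ(x)` and each `ω(v)` into `K`. Conversely,
`(v, ω(v)g) ↦ Hg` with `H = ⟨A, B⟩` is constant along every dart of the cover, so `K ≤ H`.
Thus `K = ⟨A, B⟩`, and the cover is connected iff `K = G`.
-/

namespace WalkBT

variable {Vt Dt : Type*} {B T : Dt → Vt}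

theorem single (x : Dt) : WalkBT B T (B x) (T x) [x] := cons x (nil _)

theorem append {u v w : Vt} {l₁ l₂ : List Dt} (h₁ : WalkBT B T u v l₁)
    (h₂ : WalkBT B T v w l₂) : WalkBT B T u w (l₁ ++ l₂) := by
  induction h₁ with
  | nil => exact h₂
  | cons x _ ih => exact cons x (ih h₂)

theorem map {Vt' Dt' : Type*} {B' T' : Dt' → Vt'} (fV : Vt → Vt') (fD : Dt → Dt')
    (hB : ∀ x, B' (fD x) = fV (B x)) (hT : ∀ x, T' (fD x) = fV (T x)) {u v : Vt}
    {l : List Dt} (h : WalkBT B T u v l) : WalkBT B' T' (fV u) (fV v) (l.map fD) := by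
  induction h with
  | nil v => exact nil _
  | cons x _ ih => exact hB x ▸ cons (fD x) (hT x ▸ ih)

theorem exists_reverse (I : Dt → Dt) (hB : ∀ x, B (I x) = T x) (hT : ∀ x, T (I x) = B x)
    {u v : Vt} {l : List Dt} (h : WalkBT B T u v l) : ∃ l' : List Dt, WalkBT B T v u l' := by
  induction h with
  | nil v => exact ⟨[], nil v⟩
  | cons x _ ih =>
    obtain ⟨l', hl'⟩ := ih
    exact ⟨l' ++ [I x], hl'.append (hB x ▸ hT x ▸ single (I x))⟩

theorem apply_eq {α : Type*} (f : Vt → α) (hf : ∀ x, f (B x) = f (T x)) {u v : Vt}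
    {l : List Dt} (h : WalkBT B T u v l) : f u = f v := by
  induction h with
  | nil => rfl
  | cons x _ ih => exact (hf x).trans ih

end WalkBT

namespace GenVoltage

variable {V D G : Type*} [Group G] {Δ : PreGraph V D} (Θ : GenVoltage V D G Δ)

theorem covRightV_vmk (h : G) (v : V) (g : G) :
    Θ.covRightV h (Θ.vmk v g) = Θ.vmk v (g * h) := rfl

theorem vmk_eq_vmk_iff {v : V} {a b : G} : Θ.vmk v a = Θ.vmk v b ↔ b * a⁻¹ ∈ Θ.ωv v := by
  rw [vmk, vmk, Sigma.mk.injEq, heq_eq_eq, Quotient.eq, QuotientGroup.rightRel_apply]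
  exact and_iff_right rfl

theorem covTerm_covInv (p : Θ.CovD) : Θ.covTerm (Θ.covInv p) = Θ.covBeg p := by
  obtain ⟨x, c⟩ := p
  induction c using Quotient.inductionOn with
  | h g =>
    change Θ.vmk (Δ.beg (Δ.inv (Δ.inv x))) (Θ.ζ (Δ.inv x) * (Θ.ζ x * g)) = Θ.vmk (Δ.beg x) g
    rw [Δ.inv_inv, vmk_eq_vmk_iff]
    simpa [mul_assoc] using inv_mem (Θ.wle x (Θ.wcyc x))

theorem covTerm_covRightD (h : G) (p : Θ.CovD) :
    Θ.covTerm (Θ.covRightD h p) = Θ.covRightV h (Θ.covTerm p) := by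
  obtain ⟨x, c⟩ := p
  induction c using Quotient.inductionOn with
  | h g => exact congrArg (Θ.vmk (Δ.term x)) (mul_assoc _ _ _).symm

def Reach (p q : Θ.CovV) : Prop := ∃ L : List Θ.CovD, WalkBT Θ.covBeg Θ.covTerm p q L

namespace Reach

variable {Θ}

theorem refl (p : Θ.CovV) : Θ.Reach p p := ⟨[], WalkBT.nil p⟩

theorem trans {p q r : Θ.CovV} (h₁ : Θ.Reach p q) (h₂ : Θ.Reach q r) : Θ.Reach p r :=
  let ⟨_, w₁⟩ := h₁; let ⟨_, w₂⟩ := h₂; ⟨_, w₁.append w₂⟩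

theorem symm {p q : Θ.CovV} (h : Θ.Reach p q) : Θ.Reach q p :=
  let ⟨_, w⟩ := h; w.exists_reverse Θ.covInv (fun _ => rfl) Θ.covTerm_covInv

theorem covRightV (h : G) {p q : Θ.CovV} (hpq : Θ.Reach p q) :
    Θ.Reach (Θ.covRightV h p) (Θ.covRightV h q) :=
  let ⟨_, w⟩ := hpq
  ⟨_, w.map _ _ (Θ.covBeg_covRightD h) (Θ.covTerm_covRightD h)⟩

end Reach

theorem reach_dmk (x : D) (g : G) :
    Θ.Reach (Θ.vmk (Δ.beg x) g) (Θ.vmk (Δ.term x) (Θ.ζ x * g)) :=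
  ⟨_, WalkBT.single (Θ.dmk x g)⟩

theorem reach_vmk_of_walk (g : G) {u v : V} {l : List D} (hw : WalkBT Δ.beg Δ.term u v l)
    (hl : ∀ x ∈ l, Θ.ζ x = 1) : Θ.Reach (Θ.vmk u g) (Θ.vmk v g) := by
  induction hw with
  | nil v => exact Reach.refl _
  | cons x _ ih =>
    have hx := Θ.reach_dmk x g
    rw [hl x List.mem_cons_self, one_mul] at hx
    exact hx.trans (ih fun y hy => hl y (List.mem_cons_of_mem _ hy))

def reachSubgroup (v₀ : V) : Subgroup G where
  carrier := {g | Θ.Reach (Θ.vmk v₀ 1) (Θ.vmk v₀ g)}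
  one_mem' := Reach.refl _
  mul_mem' {a b} ha hb := by
    have hab := ha.covRightV b
    rw [covRightV_vmk, covRightV_vmk, one_mul] at hab
    exact Reach.trans hb hab
  inv_mem' {a} ha := by
    have ha' := ha.covRightV a⁻¹
    rw [covRightV_vmk, covRightV_vmk, one_mul, mul_inv_cancel] at ha'
    exact ha'.symm

theorem mem_reachSubgroup {v₀ : V} {g : G} :
    g ∈ Θ.reachSubgroup v₀ ↔ Θ.Reach (Θ.vmk v₀ 1) (Θ.vmk v₀ g) := Iff.rfl

section CosetProjection

variable {H : Subgroup G} (hω : ∀ v, Θ.ωv v ≤ H)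

def cosetProj : Θ.CovV → Quotient (QuotientGroup.rightRel H) := fun p =>
  Quotient.map id (fun _ _ hab => QuotientGroup.rightRel_apply.mpr
    (hω p.1 (QuotientGroup.rightRel_apply.mp hab))) p.2

theorem Reach.cosetProj_eq (hζ : ∀ x, Θ.ζ x ∈ H) {p q : Θ.CovV} (hpq : Θ.Reach p q) :
    Θ.cosetProj hω p = Θ.cosetProj hω q := by
  obtain ⟨_, w⟩ := hpq
  refine w.apply_eq _ fun ⟨x, c⟩ => ?_
  induction c using Quotient.inductionOn with
  | h g =>
    exact Quotient.sound (QuotientGroup.rightRel_apply.mpr (by simpa [mul_assoc] using hζ x))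

include hω in
theorem reachSubgroup_le (hζ : ∀ x, Θ.ζ x ∈ H) (v₀ : V) : Θ.reachSubgroup v₀ ≤ H := by
  intro g hg
  have h := Reach.cosetProj_eq Θ hω hζ hg
  simpa using QuotientGroup.rightRel_apply.mp (Quotient.exact h)

end CosetProjection

section SpanningSubgraph

variable {S : Set D}
  (hspan : ∀ u v : V, ∃ l : List D, WalkBT Δ.beg Δ.term u v l ∧ ∀ x ∈ l, x ∈ S)
  (hnorm : ∀ x ∈ S, Θ.ζ x = 1)

include hspan hnorm

theorem reach_vmk_vmk (g : G) (u v : V) : Θ.Reach (Θ.vmk u g) (Θ.vmk v g) :=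
  let ⟨_, hw, hl⟩ := hspan u v
  Θ.reach_vmk_of_walk g hw fun x hx => hnorm x (hl x hx)

theorem voltage_mem_reachSubgroup (v₀ : V) (x : D) : Θ.ζ x ∈ Θ.reachSubgroup v₀ := by
  have hx := Θ.reach_dmk x 1
  rw [mul_one] at hx
  exact (Θ.reach_vmk_vmk hspan hnorm 1 v₀ _).trans
    (hx.trans (Θ.reach_vmk_vmk hspan hnorm _ _ v₀))

theorem weight_le_reachSubgroup (v₀ v : V) : Θ.ωv v ≤ Θ.reachSubgroup v₀ := by
  intro g hg
  have h1g : Θ.vmk v 1 = Θ.vmk v g := (Θ.vmk_eq_vmk_iff).mpr (by simpa using hg)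
  exact (Θ.reach_vmk_vmk hspan hnorm 1 v₀ v).trans
    (h1g ▸ Θ.reach_vmk_vmk hspan hnorm g v v₀)

theorem reachSubgroup_eq_closure (v₀ : V) :
    Θ.reachSubgroup v₀ = Subgroup.closure
      ({g : G | ∃ x : D, x ∉ S ∧ g = Θ.ζ x} ∪ {g : G | ∃ v : V, g ∈ Θ.ωv v}) := by
  refine le_antisymm (Θ.reachSubgroup_le (fun v _ hg => ?_) (fun x => ?_) v₀) ?_
  · exact Subgroup.subset_closure (Or.inr ⟨v, hg⟩)
  · by_cases hx : x ∈ S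
    · rw [hnorm x hx]
      exact one_mem _
    · exact Subgroup.subset_closure (Or.inl ⟨x, hx, rfl⟩)
  · rw [Subgroup.closure_le]
    rintro _ (⟨x, -, rfl⟩ | ⟨v, hg⟩)
    · exact Θ.voltage_mem_reachSubgroup hspan hnorm v₀ x
    · exact Θ.weight_le_reachSubgroup hspan hnorm v₀ v hg

theorem forall_reach_iff_reachSubgroup_eq_top (v₀ : V) :
    (∀ p q : Θ.CovV, Θ.Reach p q) ↔ Θ.reachSubgroup v₀ = ⊤ := by
  refine ⟨fun h => eq_top_iff.mpr fun g _ => h _ _, fun h p q => ?_⟩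
  obtain ⟨u, ⟨a⟩⟩ := p
  obtain ⟨w, ⟨b⟩⟩ := q
  have hab := ((Θ.mem_reachSubgroup).mp (h ▸ Subgroup.mem_top (b * a⁻¹))).covRightV a
  rw [covRightV_vmk, covRightV_vmk, one_mul, inv_mul_cancel_right] at hab
  exact (Θ.reach_vmk_vmk hspan hnorm a u v₀).trans
    (hab.trans (Θ.reach_vmk_vmk hspan hnorm b v₀ w))

end SpanningSubgraph

end GenVoltage

/-- Connectivity criterion: the generalised cover of a `T`-normalised voltage
graph is connected iff `G = ⟨A, B⟩`. -/
theorem stmt_15 {V D G : Type*} [Group G] [Nonempty V] {Δ : PreGraph V D}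
    (Θ : GenVoltage V D G Δ) (S : Set D) (hS : IsSpanningTree Δ S)
    (hnorm : ∀ x ∈ S, Θ.ζ x = 1) :
    (∀ p q : Θ.CovV, ∃ L : List Θ.CovD, WalkBT Θ.covBeg Θ.covTerm p q L) ↔
      Subgroup.closure
        ({g : G | ∃ x : D, x ∉ S ∧ g = Θ.ζ x} ∪ {g : G | ∃ v : V, g ∈ Θ.ωv v}) = ⊤ := by
  obtain ⟨v₀⟩ := ‹Nonempty V›
  rw [← Θ.reachSubgroup_eq_closure hS.2.1 hnorm v₀]
  exact Θ.forall_reach_iff_reachSubgroup_eq_top hS.2.1 hnorm v₀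
end

section
/- Let Γ be a graph and G ≤ Aut(Γ). Then there exist a weight function ω: V(Γ/G) ∪ D(Γ/G) → (subgroups of G) and a voltage assignment ζ: D(Γ/G) → G such that (Γ/G, G, ω, ζ) is a generalised voltage graph and Γ is isomorphic to GenCov(Γ/G, G, ω, ζ); moreover ω can be taken as ω(x^G) = G_x (the stabiliser) for a transversal x of each orbit, the isomorphism maps each G-orbit bijectively to a fibre, and the resulting generalised voltage graph is faithful. -/
/-!
Fix representatives `s q` of the `G`-orbits. Every `x` is `g⁻¹ • s ⟦x⟧` for some `g`, and `g` is
determined up to left multiplication by the stabiliser of `s ⟦x⟧`, so `x ↦ (⟦x⟧, G_{s ⟦x⟧} g)`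
identifies `Γ` with the cover whose weights are these stabilisers. If the representatives are
chosen so that `beg` maps dart representatives to vertex representatives, this map commutes with
`beg`; the voltage of a dart orbit is the element carrying the reverse of its representative to
the representative of the reverse orbit, which makes the map commute with `inv`. An element in
the normal core of all dart weights fixes every dart, so faithfulness of the action gives a
faithful generalised voltage graph.
-/

namespace MulAction

variable {G X Y : Type*} [Group G] [MulAction G X] [MulAction G Y]

theorem exists_smul_eq_of_mk_eq {s : orbitRel.Quotient G X → X}
    (hs : ∀ q, Quotient.mk _ (s q) = q) (x : X) : ∃ g : G, g • x = s (Quotient.mk _ x) :=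
  Quotient.eq.mp (hs (Quotient.mk _ x))

theorem orbitRel_apply_of_smul_comm {f : X → Y} (hf : ∀ (g : G) x, f (g • x) = g • f x)
    {a b : X} (h : orbitRel G X a b) : orbitRel G Y (f a) (f b) := by
  obtain ⟨g, rfl⟩ := h
  exact ⟨g, (hf g b).symm⟩

theorem stabilizer_le_stabilizer_of_smul_comm {f : X → Y} (hf : ∀ (g : G) x, f (g • x) = g • f x)
    (x : X) : stabilizer G x ≤ stabilizer G (f x) := fun g hg => by
  rw [mem_stabilizer_iff, ← hf, mem_stabilizer_iff.mp hg]

theorem stabilizer_eq_of_involutive {f : X → X} (hf : ∀ (g : G) x, f (g • x) = g • f x)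
    (hinv : ∀ x, f (f x) = x) (x : X) : stabilizer G (f x) = stabilizer G x :=
  le_antisymm ((stabilizer_le_stabilizer_of_smul_comm hf (f x)).trans_eq (by rw [hinv]))
    (stabilizer_le_stabilizer_of_smul_comm hf x)

theorem mem_stabilizer_smul_iff {g h : G} {x : X} :
    h ∈ stabilizer G (g • x) ↔ g⁻¹ * h * g ∈ stabilizer G x := by
  simp only [mem_stabilizer_iff, mul_smul, inv_smul_eq_iff]

theorem mk_apply_transversal {f : X → Y} (hf : ∀ (g : G) x, f (g • x) = g • f x)
    {s : orbitRel.Quotient G X → X} (hs : ∀ q, Quotient.mk _ (s q) = q) (x : X) :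
    Quotient.mk (orbitRel G Y) (f (s (Quotient.mk _ x))) = Quotient.mk _ (f x) := by
  obtain ⟨g, hg⟩ := exists_smul_eq_of_mk_eq hs x
  rw [← hg, hf, orbitRel.Quotient.quotient_smul_eq]

theorem exists_transversal_apply_eq_transversal_mk {f : X → Y}
    (hf : ∀ (g : G) x, f (g • x) = g • f x)
    {sY : orbitRel.Quotient G Y → Y} (hsY : ∀ q, Quotient.mk _ (sY q) = q) :
    ∃ sX : orbitRel.Quotient G X → X, (∀ q, Quotient.mk _ (sX q) = q) ∧
      ∀ q, sY (Quotient.mk _ (f (sX q))) = f (sX q) := by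
  choose g hg using fun q : orbitRel.Quotient G X => exists_smul_eq_of_mk_eq hsY (f q.out)
  refine ⟨fun q => g q • q.out, fun q => ?_, fun q => ?_⟩
  · rw [orbitRel.Quotient.quotient_smul_eq, Quotient.out_eq]
  · rw [hf, orbitRel.Quotient.quotient_smul_eq, hg]

theorem rightRel_stabilizer_mk_eq_mk_iff {y : X} {a b : G} :
    Quotient.mk (QuotientGroup.rightRel (stabilizer G y)) a = Quotient.mk _ b ↔
      a⁻¹ • y = b⁻¹ • y := by
  rw [Quotient.eq, QuotientGroup.rightRel_apply, mem_stabilizer_iff, mul_smul,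
    smul_eq_iff_eq_inv_smul]

theorem sigma_mk_eq_of_smul_eq {s : orbitRel.Quotient G X → X} {x : X}
    {q : orbitRel.Quotient G X} {a b : G} (hq : Quotient.mk _ x = q)
    (ha : a • x = s (Quotient.mk _ x)) (hb : b • x = s q) :
    (⟨Quotient.mk _ x, Quotient.mk _ a⟩ :
      Σ q, Quotient (QuotientGroup.rightRel (stabilizer G (s q)))) = ⟨q, Quotient.mk _ b⟩ := by
  subst hq
  congr 1
  rw [rightRel_stabilizer_mk_eq_mk_iff, ← ha, inv_smul_smul, ha, ← hb, inv_smul_smul]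

noncomputable def orbitCosetEquiv (s : orbitRel.Quotient G X → X)
    (hs : ∀ q, Quotient.mk _ (s q) = q) :
    X ≃ Σ q, Quotient (QuotientGroup.rightRel (stabilizer G (s q))) where
  toFun x := ⟨Quotient.mk _ x, Quotient.mk _ (exists_smul_eq_of_mk_eq hs x).choose⟩
  invFun p := Quotient.liftOn p.2 (fun g => g⁻¹ • s p.1) fun _ _ hab =>
    rightRel_stabilizer_mk_eq_mk_iff.mp (Quotient.sound hab)
  left_inv x := inv_smul_eq_iff.mpr (exists_smul_eq_of_mk_eq hs x).choose_spec.symm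
  right_inv := by
    rintro ⟨q, c⟩
    induction c using Quotient.inductionOn with
    | h g =>
      have hq : Quotient.mk _ (g⁻¹ • s q) = q := by
        rw [orbitRel.Quotient.quotient_smul_eq, hs]
      exact sigma_mk_eq_of_smul_eq hq (exists_smul_eq_of_mk_eq hs _).choose_spec
        (smul_inv_smul g (s q))

theorem orbitCosetEquiv_apply_of_smul_eq {s : orbitRel.Quotient G X → X}
    (hs : ∀ q, Quotient.mk _ (s q) = q) {x : X} {q : orbitRel.Quotient G X} {g : G}
    (hq : Quotient.mk _ x = q) (hg : g • x = s q) :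
    orbitCosetEquiv s hs x = ⟨q, Quotient.mk _ g⟩ :=
  sigma_mk_eq_of_smul_eq hq (exists_smul_eq_of_mk_eq hs x).choose_spec hg

theorem normalCore_iInf_stabilizer_eq_bot [FaithfulSMul G X] {s : orbitRel.Quotient G X → X}
    (hs : ∀ q, Quotient.mk _ (s q) = q) : (⨅ q, stabilizer G (s q)).normalCore = ⊥ := by
  refine (Subgroup.eq_bot_iff_forall _).mpr fun g hg => eq_of_smul_eq_smul (α := X) fun x => ?_
  obtain ⟨b, hb⟩ := exists_smul_eq_of_mk_eq hs x
  have hfix : b * g * b⁻¹ ∈ stabilizer G (s (Quotient.mk _ x)) :=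
    Subgroup.mem_iInf.mp (hg b) _
  rw [← hb, mem_stabilizer_smul_iff] at hfix
  simpa [mul_assoc] using hfix

end MulAction

namespace PreGraph

open MulAction

variable {V D G : Type*} [Group G] [MulAction G V] [MulAction G D] (Δ : PreGraph V D)

def orbitQuotient (hbeg : ∀ (g : G) (x : D), Δ.beg (g • x) = g • Δ.beg x)
    (hinv : ∀ (g : G) (x : D), Δ.inv (g • x) = g • Δ.inv x) :
    PreGraph (orbitRel.Quotient G V) (orbitRel.Quotient G D) where
  beg := Quotient.map Δ.beg fun _ _ => orbitRel_apply_of_smul_comm hbeg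
  inv := Quotient.map Δ.inv fun _ _ => orbitRel_apply_of_smul_comm hinv
  inv_inv := Quotient.ind fun x => congrArg (Quotient.mk _) (Δ.inv_inv x)

variable (G) in
/-- The transversals `T_V` (`vert`) and `T_D` (`dart`) of the paper, with `beg T_D ⊆ T_V`. -/
structure CompatibleTransversal where
  vert : orbitRel.Quotient G V → V
  dart : orbitRel.Quotient G D → D
  mk_vert : ∀ q, Quotient.mk _ (vert q) = q
  mk_dart : ∀ q, Quotient.mk _ (dart q) = q
  vert_beg_dart : ∀ q, vert (Quotient.mk _ (Δ.beg (dart q))) = Δ.beg (dart q)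

theorem nonempty_compatibleTransversal (hbeg : ∀ (g : G) (x : D), Δ.beg (g • x) = g • Δ.beg x) :
    Nonempty (Δ.CompatibleTransversal G) :=
  let ⟨dart, mk_dart, vert_beg_dart⟩ :=
    exists_transversal_apply_eq_transversal_mk hbeg Quotient.out_eq
  ⟨⟨Quotient.out, dart, Quotient.out_eq, mk_dart, vert_beg_dart⟩⟩

namespace CompatibleTransversal

variable {Δ} (T : Δ.CompatibleTransversal G)

noncomputable def voltage (q : orbitRel.Quotient G D) : G :=
  (exists_smul_eq_of_mk_eq T.mk_dart (Δ.inv (T.dart q))).choose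

theorem voltage_smul (q : orbitRel.Quotient G D) :
    T.voltage q • Δ.inv (T.dart q) = T.dart (Quotient.mk _ (Δ.inv (T.dart q))) :=
  (exists_smul_eq_of_mk_eq T.mk_dart (Δ.inv (T.dart q))).choose_spec

variable (hbeg : ∀ (g : G) (x : D), Δ.beg (g • x) = g • Δ.beg x)
  (hinv : ∀ (g : G) (x : D), Δ.inv (g • x) = g • Δ.inv x)

theorem orbitQuotient_beg (q : orbitRel.Quotient G D) :
    (Δ.orbitQuotient hbeg hinv).beg q = Quotient.mk _ (Δ.beg (T.dart q)) := by
  conv_lhs => rw [← T.mk_dart q]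
  rfl

theorem orbitQuotient_inv (q : orbitRel.Quotient G D) :
    (Δ.orbitQuotient hbeg hinv).inv q = Quotient.mk _ (Δ.inv (T.dart q)) := by
  conv_lhs => rw [← T.mk_dart q]
  rfl

noncomputable def genVoltage : GenVoltage _ _ G (Δ.orbitQuotient hbeg hinv) where
  ωv q := stabilizer G (T.vert q)
  ωd q := stabilizer G (T.dart q)
  ζ := T.voltage
  wle q := by
    rw [T.orbitQuotient_beg, T.vert_beg_dart]
    exact stabilizer_le_stabilizer_of_smul_comm hbeg _
  wconj q g := by
    rw [T.orbitQuotient_inv, ← T.voltage_smul, mem_stabilizer_smul_iff,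
      stabilizer_eq_of_involutive hinv Δ.inv_inv]
    simp only [mul_assoc, inv_mul_cancel_left, inv_mul_cancel, mul_one]
  wcyc q := by
    have hback : T.voltage q • T.dart q = Δ.inv (T.dart ((Δ.orbitQuotient hbeg hinv).inv q)) := by
      rw [T.orbitQuotient_inv, ← T.voltage_smul, hinv, Δ.inv_inv]
    have hforth := T.voltage_smul ((Δ.orbitQuotient hbeg hinv).inv q)
    rw [← T.orbitQuotient_inv hbeg hinv, PreGraph.inv_inv] at hforth
    rw [mem_stabilizer_iff, mul_smul, hback, hforth]

theorem orbitCosetEquiv_beg (x : D) :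
    orbitCosetEquiv T.vert T.mk_vert (Δ.beg x) =
      (T.genVoltage hbeg hinv).covBeg (orbitCosetEquiv T.dart T.mk_dart x) := by
  obtain ⟨g, hg⟩ := exists_smul_eq_of_mk_eq T.mk_dart x
  rw [orbitCosetEquiv_apply_of_smul_eq T.mk_dart rfl hg]
  refine orbitCosetEquiv_apply_of_smul_eq T.mk_vert rfl ?_
  show g • Δ.beg x = T.vert (Quotient.mk _ (Δ.beg x))
  rw [← hbeg, hg, ← T.vert_beg_dart, mk_apply_transversal hbeg T.mk_dart]

theorem orbitCosetEquiv_inv (x : D) :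
    orbitCosetEquiv T.dart T.mk_dart (Δ.inv x) =
      (T.genVoltage hbeg hinv).covInv (orbitCosetEquiv T.dart T.mk_dart x) := by
  obtain ⟨g, hg⟩ := exists_smul_eq_of_mk_eq T.mk_dart x
  rw [orbitCosetEquiv_apply_of_smul_eq T.mk_dart rfl hg]
  refine orbitCosetEquiv_apply_of_smul_eq T.mk_dart rfl ?_
  show (T.voltage (Quotient.mk _ x) * g) • Δ.inv x = T.dart (Quotient.mk _ (Δ.inv x))
  rw [mul_smul, ← hinv, hg, T.voltage_smul, mk_apply_transversal hinv T.mk_dart]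

end CompatibleTransversal

end PreGraph

/-- Reconstruction: a graph with a group of automorphisms `G` is isomorphic to a
generalised cover over its quotient, with stabilisers as weights, orbits mapped
to fibres, and the resulting generalised voltage graph faithful. -/
theorem stmt_18 {V D G : Type*} [Group G] [MulAction G V] [MulAction G D]
    (Δ : PreGraph V D)
    (hbeg : ∀ (g : G) (x : D), Δ.beg (g • x) = g • Δ.beg x)
    (hinv : ∀ (g : G) (x : D), Δ.inv (g • x) = g • Δ.inv x)
    (hfaithful : ∀ g : G, (∀ x : D, g • x = x) → g = 1) :
    ∃ (Q : PreGraph (Quotient (MulAction.orbitRel G V))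
          (Quotient (MulAction.orbitRel G D)))
      (Θ : GenVoltage (Quotient (MulAction.orbitRel G V))
          (Quotient (MulAction.orbitRel G D)) G Q),
      (∀ x : D, Q.beg (Quotient.mk (MulAction.orbitRel G D) x) =
          Quotient.mk (MulAction.orbitRel G V) (Δ.beg x)) ∧
      (∀ x : D, Q.inv (Quotient.mk (MulAction.orbitRel G D) x) =
          Quotient.mk (MulAction.orbitRel G D) (Δ.inv x)) ∧
      (∃ (secV : Quotient (MulAction.orbitRel G V) → V)
         (secD : Quotient (MulAction.orbitRel G D) → D),
        (∀ q, Quotient.mk (MulAction.orbitRel G V) (secV q) = q) ∧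
        (∀ q, Quotient.mk (MulAction.orbitRel G D) (secD q) = q) ∧
        (∀ q, Θ.ωv q = MulAction.stabilizer G (secV q)) ∧
        (∀ q, Θ.ωd q = MulAction.stabilizer G (secD q))) ∧
      (∃ (Φv : V → Θ.CovV) (Φd : D → Θ.CovD),
        Function.Bijective Φv ∧ Function.Bijective Φd ∧
        (∀ x : D, Φv (Δ.beg x) = Θ.covBeg (Φd x)) ∧
        (∀ x : D, Φd (Δ.inv x) = Θ.covInv (Φd x)) ∧
        (∀ v : V, (Φv v).1 = Quotient.mk (MulAction.orbitRel G V) v) ∧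
        (∀ x : D, (Φd x).1 = Quotient.mk (MulAction.orbitRel G D) x)) ∧
      (⨅ q, Θ.ωd q).normalCore = ⊥ := by
  have := faithfulSMul_iff.mpr hfaithful
  obtain ⟨T⟩ := Δ.nonempty_compatibleTransversal hbeg
  exact ⟨Δ.orbitQuotient hbeg hinv, T.genVoltage hbeg hinv, fun _ => rfl, fun _ => rfl,
    ⟨T.vert, T.dart, T.mk_vert, T.mk_dart, fun _ => rfl, fun _ => rfl⟩,
    ⟨MulAction.orbitCosetEquiv T.vert T.mk_vert, MulAction.orbitCosetEquiv T.dart T.mk_dart,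
      Equiv.bijective _, Equiv.bijective _, T.orbitCosetEquiv_beg hbeg hinv,
      T.orbitCosetEquiv_inv hbeg hinv, fun _ => rfl, fun _ => rfl⟩,
    MulAction.normalCore_iInf_stabilizer_eq_bot T.mk_dart⟩
end
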